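/- arXiv:1705.10979 — 2 statements merged into one kernel-verified Lean document; each statement's English description precedes it below -/
import Mathlib

section
/- For all integers m ≥ 0 and real parameters q, μ, y with 0 < q < 1, the sum over l from 0 to m of φ(l|m) equals 1, where φ(l|m) = y^l · (μ;q)_l · (y;q)_{m-l} / (μy;q)_m · [m choose l]_q. -/
noncomputable def qPoch (z q : ℝ) (m : ℕ) : ℝ := ∏ j ∈ Finset.range m, (1 - z * q ^ j)

noncomputable def qBinom (q : ℝ) (m l : ℕ) : ℝ :=
  if l ≤ m then qPoch q q m / (qPoch q q l * qPoch q q (m - l)) else 0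

noncomputable def phi (q μ y : ℝ) (l m : ℕ) : ℝ :=
  y ^ l * qPoch μ q l * qPoch y q (m - l) / qPoch (μ * y) q m * qBinom q m l

/-! With `S m = ∑ l, [m choose l]_q y^l (μ;q)_l (y;q)_{m-l}`, the q-Pascal rule
`[m+1 choose l+1]_q = [m choose l+1]_q + q^(m-l) [m choose l]_q` splits `S (m+1)` into two sums
whose `l`-th terms add up to `(1 - μ y q^m)` times the `l`-th term of `S m`. Hence
`S m = (μy;q)_m`, and the `φ(l|m)` are the terms of `S m` divided by `(μy;q)_m`. -/

@[simp]
lemma qPoch_zero (z q : ℝ) : qPoch z q 0 = 1 := by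
  simp [qPoch]

lemma qPoch_succ (z q : ℝ) (m : ℕ) : qPoch z q (m + 1) = qPoch z q m * (1 - z * q ^ m) :=
  Finset.prod_range_succ _ m

lemma qPoch_self_pos {q : ℝ} (hq0 : 0 < q) (hq1 : q < 1) (m : ℕ) : 0 < qPoch q q m :=
  Finset.prod_pos fun j _ => by
    have : q * q ^ j < 1 := mul_lt_one_of_nonneg_of_lt_one_left hq0.le hq1 (pow_le_one₀ hq0.le hq1.le)
    linarith

lemma qBinom_of_lt (q : ℝ) {m l : ℕ} (h : m < l) : qBinom q m l = 0 := by
  simp [qBinom, Nat.not_le.mpr h]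

lemma qBinom_zero_right {q : ℝ} (hq : ∀ n, qPoch q q n ≠ 0) (m : ℕ) : qBinom q m 0 = 1 := by
  simp [qBinom, hq]

lemma qBinom_self {q : ℝ} (hq : ∀ n, qPoch q q n ≠ 0) (m : ℕ) : qBinom q m m = 1 := by
  simp [qBinom, hq]

lemma qBinom_succ_succ {q : ℝ} (hq : ∀ n, qPoch q q n ≠ 0) {m l : ℕ} (hl : l ≤ m) :
    qBinom q (m + 1) (l + 1) = qBinom q m (l + 1) + q ^ (m - l) * qBinom q m l := by
  obtain ⟨k, rfl⟩ := Nat.exists_eq_add_of_le hl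
  rcases k with _ | k
  · simp [qBinom_self hq, qBinom_of_lt q (Nat.lt_succ_self l)]
  · have hl1 : 1 - q * q ^ l ≠ 0 := right_ne_zero_of_mul (qPoch_succ q q l ▸ hq (l + 1))
    have hk1 : 1 - q * q ^ k ≠ 0 := right_ne_zero_of_mul (qPoch_succ q q k ▸ hq (k + 1))
    rw [show l + (k + 1) = l + k + 1 by omega]
    simp only [qBinom, Nat.add_sub_add_right, Nat.add_sub_cancel_left,
      show l + k + 1 - l = k + 1 by omega, show l + 1 ≤ l + k + 1 + 1 by omega,
      show l + 1 ≤ l + k + 1 by omega, show l ≤ l + k + 1 by omega, if_true, qPoch_succ]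
    field_simp [hq]
    ring

lemma qPoch_mul_eq_sum_qBinom {q : ℝ} (hq : ∀ n, qPoch q q n ≠ 0) (μ y : ℝ) (m : ℕ) :
    qPoch (μ * y) q m =
      ∑ l ∈ Finset.range (m + 1), qBinom q m l * (y ^ l * qPoch μ q l * qPoch y q (m - l)) := by
  induction m with
  | zero => simp [qBinom_zero_right hq]
  | succ m ih =>
    set T := fun l => qBinom q m l * (y ^ l * qPoch μ q l * qPoch y q (m - l))
    set A := fun l => qBinom q m l * (y ^ l * qPoch μ q l * qPoch y q (m + 1 - l))
    set B := fun l => q ^ (m - l) * qBinom q m l * (y ^ (l + 1) * qPoch μ q (l + 1) * qPoch y q (m - l))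
    have hpascal : ∀ l ∈ Finset.range (m + 1),
        qBinom q (m + 1) (l + 1) * (y ^ (l + 1) * qPoch μ q (l + 1) * qPoch y q (m + 1 - (l + 1)))
          = A (l + 1) + B l := by
      intro l hl
      rw [qBinom_succ_succ hq (Finset.mem_range_succ_iff.mp hl)]
      simp only [A, B, Nat.add_sub_add_right]
      ring
    have hcombine : ∀ l ∈ Finset.range (m + 1), A l + B l = (1 - μ * y * q ^ m) * T l := by
      intro l hl
      obtain ⟨k, rfl⟩ := Nat.exists_eq_add_of_le (Finset.mem_range_succ_iff.mp hl)
      simp only [A, B, T, show l + k + 1 - l = k + 1 by omega, Nat.add_sub_cancel_left,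
        qPoch_succ, pow_add]
      ring
    have hA_last : A (m + 1) = 0 := by simp [A, qBinom_of_lt q (Nat.lt_succ_self m)]
    have hA_zero : A 0 = qBinom q (m + 1) 0 * (y ^ 0 * qPoch μ q 0 * qPoch y q (m + 1 - 0)) := by
      simp [A, qBinom_zero_right hq]
    calc qPoch (μ * y) q (m + 1)
        = ∑ l ∈ Finset.range (m + 1), (1 - μ * y * q ^ m) * T l := by
          rw [qPoch_succ, ih, mul_comm, Finset.mul_sum]
      _ = ∑ l ∈ Finset.range (m + 1), (A l + B l) := (Finset.sum_congr rfl hcombine).symm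
      _ = ∑ l ∈ Finset.range (m + 2), A l + ∑ l ∈ Finset.range (m + 1), B l := by
          rw [Finset.sum_add_distrib, Finset.sum_range_succ A (m + 1), hA_last, add_zero]
      _ = _ := by
          rw [Finset.sum_range_succ' A, Finset.sum_range_succ' _ (m + 1),
            Finset.sum_congr rfl hpascal, Finset.sum_add_distrib, hA_zero]
          ring

theorem sum_phi_eq_one (q μ y : ℝ) (m : ℕ) (hq0 : 0 < q) (hq1 : q < 1)
    (hpoch : qPoch (μ * y) q m ≠ 0) :
    ∑ l ∈ Finset.range (m + 1), phi q μ y l m = 1 := by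
  have hq : ∀ n, qPoch q q n ≠ 0 := fun n => (qPoch_self_pos hq0 hq1 n).ne'
  calc ∑ l ∈ Finset.range (m + 1), phi q μ y l m
      = (∑ l ∈ Finset.range (m + 1), qBinom q m l * (y ^ l * qPoch μ q l * qPoch y q (m - l)))
          / qPoch (μ * y) q m := by
        rw [Finset.sum_div]
        refine Finset.sum_congr rfl fun l _ => ?_
        rw [phi]
        ring
    _ = 1 := by rw [← qPoch_mul_eq_sum_qBinom hq, div_self hpoch]
end

section
/- For 0 < q, μ, y < 1, the weighted current identity ∑_{n ≥ l ≥ 1} l w_-(l|n) P(n) = h(y) holds, where w_-(l|n) = (q;q)_{l-1}/(μ q^{n-l};q)_l · [n choose l]_q, P(n) = y^n (μ;q)_n/(q;q)_n · (y;q)_∞/(μy;q)_∞, and h(y) = ∑_{l ≥ 1} l y^l/(1 - q^l). In particular the result is independent of μ. -/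
open Real Filter

noncomputable def qPochInf (z q : ℝ) : ℝ := ∏' j : ℕ, (1 - z * q ^ j)

lemma qPoch_factor_lt_one {z q : ℝ} (hz : 0 ≤ z) (hz1 : z < 1) (hq0 : 0 ≤ q) (hq1 : q ≤ 1)
    (j : ℕ) : z * q ^ j < 1 :=
  lt_of_le_of_lt (by calc z * q ^ j ≤ z * 1 := by gcongr; exact pow_le_one₀ hq0 hq1
                       _ = z := mul_one z) hz1

lemma qPoch_pos {z q : ℝ} (hz : 0 ≤ z) (hz1 : z < 1) (hq0 : 0 ≤ q) (hq1 : q ≤ 1) (n : ℕ) :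
    0 < qPoch z q n := by
  apply Finset.prod_pos
  intro j _
  have := qPoch_factor_lt_one hz hz1 hq0 hq1 j
  linarith

lemma qPoch_le_one {z q : ℝ} (hz : 0 ≤ z) (hz1 : z < 1) (hq0 : 0 ≤ q) (hq1 : q ≤ 1) (n : ℕ) :
    qPoch z q n ≤ 1 := by
  apply Finset.prod_le_one
  · intro j _
    have := qPoch_factor_lt_one hz hz1 hq0 hq1 j
    linarith
  · intro j _
    nlinarith [mul_nonneg hz (pow_nonneg hq0 j)]

lemma summable_log_qPoch {z q : ℝ} (hz : 0 ≤ z) (hz1 : z < 1) (hq0 : 0 < q) (hq1 : q < 1) :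
    Summable fun n : ℕ => Real.log (1 - z * q ^ n) := by
  have key : Summable fun n : ℕ => -Real.log (1 - z * q ^ n) := by
    apply Summable.of_nonneg_of_le (f := fun n => z / (1 - z) * q ^ n)
    · intro n
      have h := qPoch_factor_lt_one hz hz1 hq0.le hq1.le n
      simp only [neg_nonneg]
      exact Real.log_nonpos (by linarith) (by nlinarith [mul_nonneg hz (pow_nonneg hq0.le n)])
    · intro n
      have h := qPoch_factor_lt_one hz hz1 hq0.le hq1.le n
      have h2 : 0 < 1 - z * q ^ n := by linarith
      have h3 := Real.log_le_sub_one_of_pos (inv_pos.2 h2)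
      rw [Real.log_inv] at h3
      have h4 : z * q ^ n ≤ z := by nlinarith [pow_le_one₀ hq0.le hq1.le (n := n), pow_nonneg hq0.le n]
      have h5 : (1 - z * q ^ n)⁻¹ - 1 = (z * q ^ n) / (1 - z * q ^ n) := by field_simp; ring
      rw [h5] at h3
      calc -Real.log (1 - z * q ^ n) ≤ (z * q ^ n) / (1 - z * q ^ n) := h3
        _ ≤ (z * q ^ n) / (1 - z) := by
            gcongr
            all_goals nlinarith [mul_nonneg hz (pow_nonneg hq0.le n), h4]
        _ = z / (1 - z) * q ^ n := by ring
    · exact (summable_geometric_of_lt_one hq0.le hq1).mul_left _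
  simpa using key.neg

lemma hasProd_qPochInf {z q : ℝ} (hz : 0 ≤ z) (hz1 : z < 1) (hq0 : 0 < q) (hq1 : q < 1) :
    HasProd (fun j : ℕ => 1 - z * q ^ j) (qPochInf z q) :=
  (Real.multipliable_of_summable_log (f := fun n => 1 - z * q ^ n)
    (fun n => by have := qPoch_factor_lt_one hz hz1 hq0.le hq1.le n
                 show (0:ℝ) < 1 - z * q ^ n
                 nlinarith [mul_nonneg hz (pow_nonneg hq0.le n)])
    (summable_log_qPoch hz hz1 hq0 hq1)).hasProd

lemma qPochInf_pos {z q : ℝ} (hz : 0 ≤ z) (hz1 : z < 1) (hq0 : 0 < q) (hq1 : q < 1) :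
    0 < qPochInf z q := by
  have h := (Real.rexp_tsum_eq_tprod (f := fun n => 1 - z * q ^ n)
    (fun n => by have := qPoch_factor_lt_one hz hz1 hq0.le hq1.le n
                 show (0:ℝ) < 1 - z * q ^ n
                 nlinarith [mul_nonneg hz (pow_nonneg hq0.le n)])
    (summable_log_qPoch hz hz1 hq0 hq1))
  rw [qPochInf, ← h]
  exact Real.exp_pos _

lemma tendsto_qPoch {z q : ℝ} (hz : 0 ≤ z) (hz1 : z < 1) (hq0 : 0 < q) (hq1 : q < 1) :
    Tendsto (fun n => qPoch z q n) atTop (nhds (qPochInf z q)) :=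
  (hasProd_qPochInf hz hz1 hq0 hq1).tendsto_prod_nat

lemma qPoch_antitone {z q : ℝ} (hz : 0 ≤ z) (hz1 : z < 1) (hq0 : 0 ≤ q) (hq1 : q ≤ 1) :
    Antitone (fun n => qPoch z q n) := by
  apply antitone_nat_of_succ_le
  intro n
  have h1 : qPoch z q (n + 1) = qPoch z q n * (1 - z * q ^ n) := Finset.prod_range_succ _ _
  have h2 := qPoch_factor_lt_one hz hz1 hq0 hq1 n
  have h3 := qPoch_pos hz hz1 hq0 hq1 n
  nlinarith [mul_nonneg hz (pow_nonneg hq0 n)]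

lemma qPochInf_le_qPoch {z q : ℝ} (hz : 0 ≤ z) (hz1 : z < 1) (hq0 : 0 < q) (hq1 : q < 1)
    (n : ℕ) : qPochInf z q ≤ qPoch z q n := by
  apply le_of_tendsto (tendsto_qPoch hz hz1 hq0 hq1)
  filter_upwards [eventually_ge_atTop n] with m hm
  exact qPoch_antitone hz hz1 hq0.le hq1.le hm

lemma qPoch_add (z q : ℝ) (m n : ℕ) :
    qPoch z q (m + n) = qPoch z q m * qPoch (z * q ^ m) q n := by
  rw [qPoch, Finset.prod_range_add, qPoch, qPoch]
  congr 1
  apply Finset.prod_congr rfl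
  intro j _
  rw [pow_add]
  ring

section qBinomialThm

variable {q μ : ℝ} (hq0 : 0 < q) (hq1 : q < 1) (hμ0 : 0 < μ) (hμ1 : μ < 1)

noncomputable def aCoef (q μ : ℝ) (k : ℕ) : ℝ := qPoch μ q k / qPoch q q k

include hq0 hq1 hμ0 hμ1

lemma aCoef_nonneg (k : ℕ) : 0 ≤ aCoef q μ k :=
  div_nonneg (qPoch_pos hμ0.le hμ1 hq0.le hq1.le k).le (qPoch_pos hq0.le hq1 hq0.le hq1.le k).le

lemma aCoef_le (k : ℕ) : aCoef q μ k ≤ (qPochInf q q)⁻¹ := by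
  have hc : 0 < qPochInf q q := qPochInf_pos hq0.le hq1 hq0 hq1
  have h1 : qPochInf q q ≤ qPoch q q k := qPochInf_le_qPoch hq0.le hq1 hq0 hq1 k
  have h2 : qPoch μ q k ≤ 1 := qPoch_le_one hμ0.le hμ1 hq0.le hq1.le k
  rw [aCoef, div_le_iff₀ (qPoch_pos hq0.le hq1 hq0.le hq1.le k)]
  rw [inv_mul_eq_div, le_div_iff₀ hc]
  nlinarith [qPoch_pos hμ0.le hμ1 hq0.le hq1.le k]

lemma summable_aCoef_mul {t : ℝ} (ht0 : 0 ≤ t) (ht1 : t < 1) :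
    Summable fun k => aCoef q μ k * t ^ k := by
  apply Summable.of_nonneg_of_le (f := fun k => (qPochInf q q)⁻¹ * t ^ k)
  · intro k
    exact mul_nonneg (aCoef_nonneg hq0 hq1 hμ0 hμ1 k) (pow_nonneg ht0 k)
  · intro k
    exact mul_le_mul_of_nonneg_right (aCoef_le hq0 hq1 hμ0 hμ1 k) (pow_nonneg ht0 k)
  · exact (summable_geometric_of_lt_one ht0 ht1).mul_left _

lemma aCoef_zero : aCoef q μ 0 = 1 := by simp [aCoef, qPoch]

lemma aCoef_rec (k : ℕ) :
    aCoef q μ (k + 1) * (1 - q ^ (k + 1)) = aCoef q μ k * (1 - μ * q ^ k) := by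
  have h1 : qPoch μ q (k + 1) = qPoch μ q k * (1 - μ * q ^ k) := Finset.prod_range_succ _ _
  have h2 : qPoch q q (k + 1) = qPoch q q k * (1 - q * q ^ k) := Finset.prod_range_succ _ _
  have h3 : (qPoch q q k) ≠ 0 := (qPoch_pos hq0.le hq1 hq0.le hq1.le k).ne'
  have h4 : (1 - q * q ^ k) ≠ 0 := by
    have := qPoch_factor_lt_one hq0.le hq1 hq0.le hq1.le k
    intro h; nlinarith
  rw [aCoef, aCoef, h1, h2, pow_succ']
  rw [div_mul_eq_mul_div, mul_div_mul_right _ _ h4]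
  ring

lemma func_eq {t : ℝ} (ht0 : 0 ≤ t) (ht1 : t < 1) :
    (1 - t) * (∑' k, aCoef q μ k * t ^ k) = (1 - μ * t) * (∑' k, aCoef q μ k * (q * t) ^ k) := by
  have hqt0 : 0 ≤ q * t := mul_nonneg hq0.le ht0
  have hqt1 : q * t < 1 := by nlinarith
  have S1 := summable_aCoef_mul hq0 hq1 hμ0 hμ1 ht0 ht1
  have S2 := summable_aCoef_mul hq0 hq1 hμ0 hμ1 hqt0 hqt1
  have E : (∑' k, aCoef q μ k * t ^ k) - (∑' k, aCoef q μ k * (q * t) ^ k)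
      = t * (∑' k, aCoef q μ k * t ^ k) - μ * t * (∑' k, aCoef q μ k * (q * t) ^ k) := by
    calc (∑' k, aCoef q μ k * t ^ k) - (∑' k, aCoef q μ k * (q * t) ^ k)
        = ∑' k, (aCoef q μ k * t ^ k - aCoef q μ k * (q * t) ^ k) := (S1.tsum_sub S2).symm
      _ = ∑' k, (aCoef q μ (k+1) * t ^ (k+1) - aCoef q μ (k+1) * (q * t) ^ (k+1)) := by
          rw [(S1.sub S2).tsum_eq_zero_add]
          simp
      _ = ∑' k, (aCoef q μ (k+1) * (1 - q ^ (k+1)) * t ^ (k+1)) := by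
          apply tsum_congr; intro k; rw [mul_pow]; ring
      _ = ∑' k, (aCoef q μ k * (1 - μ * q ^ k) * t ^ (k+1)) := by
          apply tsum_congr; intro k; rw [aCoef_rec hq0 hq1 hμ0 hμ1 k]
      _ = ∑' k, (t * (aCoef q μ k * t ^ k) - μ * t * (aCoef q μ k * (q * t) ^ k)) := by
          apply tsum_congr; intro k; rw [mul_pow]; ring
      _ = t * (∑' k, aCoef q μ k * t ^ k) - μ * t * (∑' k, aCoef q μ k * (q * t) ^ k) := by
          rw [(S1.mul_left t).tsum_sub (S2.mul_left (μ * t)), tsum_mul_left, tsum_mul_left]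
  linear_combination E

lemma iterate_eq {y : ℝ} (hy0 : 0 < y) (hy1 : y < 1) (n : ℕ) :
    (∑' k, aCoef q μ k * y ^ k) * qPoch y q n
      = qPoch (μ * y) q n * ∑' k, aCoef q μ k * (q ^ n * y) ^ k := by
  induction n with
  | zero => simp [qPoch]
  | succ n ih =>
    have h1 : qPoch y q (n+1) = qPoch y q n * (1 - y * q ^ n) := Finset.prod_range_succ _ _
    have h2 : qPoch (μ*y) q (n+1) = qPoch (μ*y) q n * (1 - (μ*y) * q ^ n) :=
      Finset.prod_range_succ _ _
    have hp1 : q ^ n ≤ 1 := pow_le_one₀ hq0.le hq1.le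
    have hp0 : 0 < q ^ n := pow_pos hq0 n
    have ht0 : 0 ≤ q ^ n * y := by positivity
    have ht1 : q ^ n * y < 1 := by nlinarith
    have FE := func_eq hq0 hq1 hμ0 hμ1 ht0 ht1
    have harg : q * (q ^ n * y) = q ^ (n+1) * y := by ring
    rw [harg] at FE
    rw [h1, h2]
    linear_combination (1 - y * q ^ n) * ih + qPoch (μ*y) q n * FE

lemma F_bounds {t : ℝ} (ht0 : 0 ≤ t) (ht1 : t < 1) :
    1 ≤ (∑' k, aCoef q μ k * t ^ k) ∧
      (∑' k, aCoef q μ k * t ^ k) ≤ 1 + (qPochInf q q)⁻¹ * t * (1 - t)⁻¹ := by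
  have S1 := summable_aCoef_mul hq0 hq1 hμ0 hμ1 ht0 ht1
  rw [S1.tsum_eq_zero_add, aCoef_zero hq0 hq1 hμ0 hμ1, pow_zero, mul_one]
  constructor
  · have : 0 ≤ ∑' k, aCoef q μ (k+1) * t ^ (k+1) := by
      apply tsum_nonneg
      intro k
      exact mul_nonneg (aCoef_nonneg hq0 hq1 hμ0 hμ1 _) (pow_nonneg ht0 _)
    linarith
  · have hb : (∑' k, aCoef q μ (k+1) * t ^ (k+1))
        ≤ ∑' k : ℕ, ((qPochInf q q)⁻¹ * t) * t ^ k := by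
      apply Summable.tsum_le_tsum
      · intro k
        have h1 := aCoef_le hq0 hq1 hμ0 hμ1 (k+1)
        have h2 : t ^ (k+1) = t * t ^ k := by ring
        rw [h2]
        have h3 : 0 ≤ t * t ^ k := mul_nonneg ht0 (pow_nonneg ht0 k)
        calc aCoef q μ (k+1) * (t * t ^ k) ≤ (qPochInf q q)⁻¹ * (t * t ^ k) :=
              mul_le_mul_of_nonneg_right h1 h3
          _ = (qPochInf q q)⁻¹ * t * t ^ k := by ring
      · exact (S1.comp_injective (add_left_injective 1)).congr (by intro k; simp [Function.comp])
      · exact (summable_geometric_of_lt_one ht0 ht1).mul_left _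
    rw [tsum_mul_left, tsum_geometric_of_lt_one ht0 ht1] at hb
    linarith [hb]

lemma tendsto_F {y : ℝ} (hy0 : 0 < y) (hy1 : y < 1) :
    Tendsto (fun n => ∑' k, aCoef q μ k * (q ^ n * y) ^ k) atTop (nhds 1) := by
  have hc : 0 < qPochInf q q := qPochInf_pos hq0.le hq1 hq0 hq1
  have harg : ∀ n : ℕ, 0 ≤ q ^ n * y ∧ q ^ n * y ≤ y ∧ q ^ n * y < 1 := by
    intro n
    have hp1 : q ^ n ≤ 1 := pow_le_one₀ hq0.le hq1.le
    have hp0 : 0 < q ^ n := pow_pos hq0 n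
    refine ⟨by positivity, by nlinarith, by nlinarith⟩
  apply tendsto_of_tendsto_of_tendsto_of_le_of_le (g := fun _ : ℕ => (1:ℝ))
    (h := fun n => 1 + (qPochInf q q)⁻¹ * (q ^ n * y) * (1 - y)⁻¹)
  · exact tendsto_const_nhds
  · have h0 : Tendsto (fun n : ℕ => q ^ n) atTop (nhds 0) :=
      tendsto_pow_atTop_nhds_zero_of_lt_one hq0.le hq1
    have hcont : Continuous fun x : ℝ => 1 + (qPochInf q q)⁻¹ * (x * y) * (1 - y)⁻¹ := by
      continuity
    have := (hcont.tendsto 0).comp h0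
    simpa [Function.comp_def] using this
  · intro n
    exact (F_bounds hq0 hq1 hμ0 hμ1 (harg n).1 (harg n).2.2).1
  · intro n
    have h1 := (F_bounds hq0 hq1 hμ0 hμ1 (harg n).1 (harg n).2.2).2
    have h2 : (1 - (q ^ n * y))⁻¹ ≤ (1 - y)⁻¹ := by
      apply inv_anti₀
      · linarith [(harg n).2.2, hy1]
      · linarith [(harg n).2.1]
    calc (∑' k, aCoef q μ k * (q ^ n * y) ^ k)
        ≤ 1 + (qPochInf q q)⁻¹ * (q ^ n * y) * (1 - (q ^ n * y))⁻¹ := h1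
      _ ≤ 1 + (qPochInf q q)⁻¹ * (q ^ n * y) * (1 - y)⁻¹ :=
          add_le_add_right (mul_le_mul_of_nonneg_left h2
            (mul_nonneg (inv_nonneg.2 hc.le) (harg n).1)) 1

lemma qbinomial {y : ℝ} (hy0 : 0 < y) (hy1 : y < 1) :
    ∑' k, aCoef q μ k * y ^ k = qPochInf (μ * y) q / qPochInf y q := by
  have hμy0 : 0 ≤ μ * y := by positivity
  have hμy1 : μ * y < 1 := by nlinarith
  have h1 : Tendsto (fun n => (∑' k, aCoef q μ k * y ^ k) * qPoch y q n) atTop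
      (nhds ((∑' k, aCoef q μ k * y ^ k) * qPochInf y q)) :=
    (tendsto_qPoch hy0.le hy1 hq0 hq1).const_mul _
  have h2 : Tendsto (fun n => qPoch (μ*y) q n * ∑' k, aCoef q μ k * (q ^ n * y) ^ k) atTop
      (nhds (qPochInf (μ*y) q * 1)) :=
    (tendsto_qPoch hμy0 hμy1 hq0 hq1).mul (tendsto_F hq0 hq1 hμ0 hμ1 hy0 hy1)
  have h3 := tendsto_nhds_unique
    (h1.congr (fun n => iterate_eq hq0 hq1 hμ0 hμ1 hy0 hy1 n)) h2
  have hne : qPochInf y q ≠ 0 := (qPochInf_pos hy0.le hy1 hq0 hq1).ne'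
  rw [eq_div_iff hne]
  linarith [h3]

end qBinomialThm

/-- hopping rate `w₋(l|n) = (q;q)_{l-1}/(μ q^{n-l};q)_l · [n choose l]_q` for `l ≥ 1`,
here written with `l = l'+1`, `n = l'+1+k`. -/
noncomputable def wMinus (q μ : ℝ) (l n : ℕ) : ℝ :=
  qPoch q q (l - 1) / qPoch (μ * q ^ (n - l)) q l * qBinom q n l

/-- stationary probability `P(n)` in the defect-free grand canonical ensemble. -/
noncomputable def P (q μ y : ℝ) (n : ℕ) : ℝ :=
  y ^ n * (qPoch μ q n / qPoch q q n) * (qPochInf y q / qPochInf (μ * y) q)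

lemma term_eq {q μ y : ℝ}
    (hq0 : 0 < q) (hq1 : q < 1) (hμ0 : 0 < μ) (hμ1 : μ < 1) (hy0 : 0 < y) (hy1 : y < 1)
    (l k : ℕ) :
    ((l : ℝ) + 1) * wMinus q μ (l + 1) (l + 1 + k) * P q μ y (l + 1 + k)
      = (((l : ℝ) + 1) * y ^ (l + 1) / (1 - q ^ (l + 1))
          * (qPochInf y q / qPochInf (μ * y) q)) * (aCoef q μ k * y ^ k) := by
  have hsub1 : l + 1 + k - (l + 1) = k := by omega
  have hsub2 : l + 1 - 1 = l := by omega
  rw [wMinus, P, qBinom, if_pos (by omega : l + 1 ≤ l + 1 + k), hsub1, hsub2]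
  have hsplit : qPoch μ q (l + 1 + k) = qPoch μ q k * qPoch (μ * q ^ k) q (l + 1) := by
    have h := qPoch_add μ q k (l + 1)
    rw [show k + (l + 1) = l + 1 + k by omega] at h
    exact h
  have hq_succ : qPoch q q (l + 1) = qPoch q q l * (1 - q * q ^ l) := Finset.prod_range_succ _ _
  have hμqk0 : 0 ≤ μ * q ^ k := by positivity
  have hμqk1 : μ * q ^ k < 1 := qPoch_factor_lt_one hμ0.le hμ1 hq0.le hq1.le k
  have n1 : qPoch q q k ≠ 0 := (qPoch_pos hq0.le hq1 hq0.le hq1.le k).ne'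
  have n2 : qPoch q q l ≠ 0 := (qPoch_pos hq0.le hq1 hq0.le hq1.le l).ne'
  have n3 : qPoch (μ * q ^ k) q (l + 1) ≠ 0 :=
    (qPoch_pos hμqk0 hμqk1 hq0.le hq1.le (l + 1)).ne'
  have n4 : qPoch q q (l + 1 + k) ≠ 0 := (qPoch_pos hq0.le hq1 hq0.le hq1.le (l + 1 + k)).ne'
  have n5 : (1 - q * q ^ l) ≠ 0 := by
    have := qPoch_factor_lt_one hq0.le hq1 hq0.le hq1.le l
    intro h; nlinarith
  have n6 : qPochInf (μ * y) q ≠ 0 := by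
    have hμy0 : 0 ≤ μ * y := by positivity
    have hμy1 : μ * y < 1 := by nlinarith
    exact (qPochInf_pos hμy0 hμy1 hq0 hq1).ne'
  have hpow : q ^ (l + 1) = q * q ^ l := by ring
  rw [aCoef, hsplit, hq_succ, hpow]
  field_simp
  ring

theorem current_minus_eq_h (q μ y : ℝ)
    (hq0 : 0 < q) (hq1 : q < 1) (hμ0 : 0 < μ) (hμ1 : μ < 1) (hy0 : 0 < y) (hy1 : y < 1) :
    ∑' l : ℕ, ∑' k : ℕ,
        ((l : ℝ) + 1) * wMinus q μ (l + 1) (l + 1 + k) * P q μ y (l + 1 + k)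
      = ∑' j : ℕ, ((j : ℝ) + 1) * y ^ (j + 1) / (1 - q ^ (j + 1)) := by
  have hIy : qPochInf y q ≠ 0 := (qPochInf_pos hy0.le hy1 hq0 hq1).ne'
  have hIμy : qPochInf (μ * y) q ≠ 0 := by
    have hμy0 : 0 ≤ μ * y := by positivity
    have hμy1 : μ * y < 1 := by nlinarith
    exact (qPochInf_pos hμy0 hμy1 hq0 hq1).ne'
  have hQB := qbinomial hq0 hq1 hμ0 hμ1 hy0 hy1
  apply tsum_congr
  intro l
  calc ∑' k : ℕ, ((l : ℝ) + 1) * wMinus q μ (l + 1) (l + 1 + k) * P q μ y (l + 1 + k)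
      = ∑' k : ℕ, (((l : ℝ) + 1) * y ^ (l + 1) / (1 - q ^ (l + 1))
          * (qPochInf y q / qPochInf (μ * y) q)) * (aCoef q μ k * y ^ k) :=
        tsum_congr (fun k => term_eq hq0 hq1 hμ0 hμ1 hy0 hy1 l k)
    _ = (((l : ℝ) + 1) * y ^ (l + 1) / (1 - q ^ (l + 1))
          * (qPochInf y q / qPochInf (μ * y) q)) * ∑' k : ℕ, aCoef q μ k * y ^ k :=
        tsum_mul_left
    _ = ((l : ℝ) + 1) * y ^ (l + 1) / (1 - q ^ (l + 1)) := by
        rw [hQB]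
        have n6 : (1 : ℝ) - q ^ (l + 1) ≠ 0 := by
          have h1 : q ^ (l + 1) < 1 := pow_lt_one₀ hq0.le hq1 (by omega)
          intro h; linarith
        field_simp
end
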